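/- arXiv:1408.3694 — 9 statements merged into one kernel-verified Lean document; each statement's English description precedes it below -/
import Mathlib

section
/- (Higman's lemma) For any finite set Σ, the poset Σ* of finite words over Σ, ordered by the subword (subsequence) relation, is well partially ordered. -/
theorem List.sublistForall₂_eq_eq_sublist {α : Type*} :
    SublistForall₂ ((· = ·) : α → α → Prop) = Sublist := by
  ext l₁ l₂
  simp [sublistForall₂_iff, forall₂_eq_eq_eq]

theorem WellQuasiOrdered.sublistForall₂ {α : Type*} {r : α → α → Prop} [IsPreorder α r]
    (hr : WellQuasiOrdered r) : WellQuasiOrdered (List.SublistForall₂ r) := by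
  have h := (Set.partiallyWellOrderedOn_univ_iff.2 hr).partiallyWellOrderedOn_sublistForall₂ r
  simp only [Set.mem_univ, implies_true, Set.ofPred_true] at h
  exact Set.partiallyWellOrderedOn_univ_iff.1 h

theorem List.wellQuasiOrdered_sublist (α : Type*) [Finite α] :
    WellQuasiOrdered (@Sublist α) :=
  sublistForall₂_eq_eq_sublist ▸ (Finite.wellQuasiOrdered (α := α) (· = ·)).sublistForall₂

/-- Higman's lemma: for a finite alphabet `Σ`, the poset of finite words over
`Σ` ordered by the subword (subsequence) relation is well partially ordered. -/
theorem higman_lemma {σ : Type*} [Finite σ] (f : ℕ → List σ) :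
    ∃ i j : ℕ, i < j ∧ (f i).Sublist (f j) :=
  List.wellQuasiOrdered_sublist σ f
end

section
/- For a finite set Σ, the poset Σ̃* is well partially ordered, where Σ̃* has the finite words over Σ as elements and s_1⋯s_n ≤ s'_1⋯s'_m iff there is a strictly increasing f: {1,...,n} → {1,...,m} with s'_{f(i)} = s_i for all i, and additionally for every j in {1,...,m} there exists i with f(i) ≤ j and s'_j = s'_{f(i)}. -/
/-!
Tag every letter of a word with the set of letters occurring strictly before it, and the
word itself with its set of letters. Both tags range over finite sets, so Higman's lemma and
Dickson's lemma give `i < j` such that `w i` and `w j` have the same letters and the tagged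
`w i` embeds into the tagged `w j` as a subword. Such an embedding `f` already witnesses
`TildeWordLE (w i) (w j)`: every letter `a` of `w j` occurs in `w i`, and `f` sends the first
occurrence of `a` in `w i` to a position of `w j` with no `a` before it, i.e. to the first
occurrence of `a` in `w j`.
-/

/-- The order on words from the variant of Higman's lemma:
`l ≤ l'` iff there is a strictly increasing `f` with `l'_{f(i)} = l_i` for all `i`,
and for every position `j` of `l'` there is an `i` with `f(i) ≤ j` and
`l'_j = l'_{f(i)}`. -/
def TildeWordLE {σ : Type*} (l l' : List σ) : Prop :=
  ∃ f : Fin l.length → Fin l'.length, StrictMono f ∧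
    (∀ i, l'.get (f i) = l.get i) ∧
    (∀ j : Fin l'.length, ∃ i, (f i : ℕ) ≤ (j : ℕ) ∧ l'.get j = l'.get (f i))

namespace List

variable {α : Type*}

theorem wellQuasiOrdered_sublist_s4 [Finite α] :
    WellQuasiOrdered (Sublist : List α → List α → Prop) := by
  have higman := Set.partiallyWellOrderedOn_univ_iff.2 (Finite.wellQuasiOrdered (α := α) (· = ·))
    |>.partiallyWellOrderedOn_sublistForall₂ (· = ·)
  intro v
  obtain ⟨m, n, hmn, hsub⟩ := higman.exists_lt (f := v) fun _ _ _ ↦ Set.mem_univ _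
  obtain ⟨l, hl, hsub⟩ := sublistForall₂_iff.1 hsub
  rw [forall₂_eq_eq_eq] at hl
  exact ⟨m, n, hmn, hl ▸ hsub⟩

theorem notMem_take_idxOf [BEq α] [LawfulBEq α] (l : List α) (a : α) :
    a ∉ l.take (l.idxOf a) := by
  intro h
  obtain ⟨k, hk, hka⟩ := mem_take_iff_getElem.1 h
  have := not_of_lt_findIdx (p := (· == a)) (lt_of_lt_of_le hk (min_le_left _ _))
  simp [hka] at this

def withLettersBefore (l : List α) : List (α × Set α) :=
  ofFn fun i : Fin l.length ↦ (l[i], {a | a ∈ l.take i})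

theorem length_withLettersBefore (l : List α) : l.withLettersBefore.length = l.length :=
  length_ofFn

theorem exists_strictMono_of_withLettersBefore_sublist {l l' : List α}
    (h : l.withLettersBefore <+ l'.withLettersBefore) :
    ∃ f : Fin l.length → Fin l'.length, StrictMono f ∧
      ∀ i, l'.get (f i) = l.get i ∧ ∀ a, a ∈ l'.take (f i) ↔ a ∈ l.take i := by
  obtain ⟨e, he⟩ := sublist_iff_exists_fin_orderEmbedding_get_eq.1 h
  refine ⟨fun i ↦ Fin.cast l'.length_withLettersBefore
    (e (Fin.cast l.length_withLettersBefore.symm i)), fun _ _ hab ↦ e.strictMono hab,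
    fun i ↦ ?_⟩
  have := he (Fin.cast l.length_withLettersBefore.symm i)
  simp only [withLettersBefore, Fin.getElem_fin, get_eq_getElem, List.getElem_ofFn,
    Prod.mk.injEq] at this
  exact ⟨this.1.symm, fun a ↦ (Set.ext_iff.1 this.2 a).symm⟩

end List

theorem tildeWordLE_of_strictMono {α : Type*} {l l' : List α} (f : Fin l.length → Fin l'.length)
    (hf : StrictMono f) (hget : ∀ i, l'.get (f i) = l.get i)
    (hbefore : ∀ i, ∀ a ∈ l'.take (f i), a ∈ l.take i) (hmem : ∀ a ∈ l', a ∈ l) :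
    TildeWordLE l l' := by
  classical
  refine ⟨f, hf, hget, fun j ↦ ?_⟩
  have hj : l'.get j ∈ l := hmem _ (List.get_mem _ _)
  set i₀ : Fin l.length := ⟨l.idxOf (l'.get j), List.idxOf_lt_length_iff.2 hj⟩
  refine ⟨i₀, not_lt.1 fun hlt ↦ l.notMem_take_idxOf (l'.get j) (hbefore i₀ _ ?_), ?_⟩
  · exact List.mem_take_iff_getElem.2 ⟨j, by simp [hlt], rfl⟩
  · rw [hget]
    exact (List.getElem_idxOf _).symm

/-- For a finite alphabet `σ`, the poset `σ̃*` is well partially ordered. -/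
theorem tilde_words_wpo {σ : Type*} [Finite σ] (w : ℕ → List σ) :
    ∃ i j : ℕ, i < j ∧ TildeWordLE (w i) (w j) := by
  have wqo := (Finite.wellQuasiOrdered (α := Set σ) (· = ·)).prod
    (List.wellQuasiOrdered_sublist_s4 (α := σ × Set σ))
  obtain ⟨i, j, hij, hletters, hsub⟩ := wqo fun n ↦ ({a | a ∈ w n}, (w n).withLettersBefore)
  obtain ⟨f, hf, hfget⟩ := List.exists_strictMono_of_withLettersBefore_sublist hsub
  exact ⟨i, j, hij, tildeWordLE_of_strictMono f hf (fun k ↦ (hfget k).1)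
    (fun k a ↦ ((hfget k).2 a).1) (fun a ↦ (Set.ext_iff.1 hletters a).2)⟩
end

section
/- Let Φ: C → D be a functor between small categories that is essentially surjective and finite (meaning Φ*(P_{D,y}) is a finitely generated C-module for every object y of D). If the category of C-modules over a ring k is Noetherian, then the category of D-modules over k is Noetherian. -/
/-!
Restriction along `Φ` preserves finite generation. If `M` is generated by `gⱼ ∈ M(dⱼ)`, each `gⱼ`
gives a map `P_{D,dⱼ} ⟶ M`, and the images of the finitely many generators of the `Φ*P_{D,dⱼ}`
generate `Φ*M`: given a subfunctor `N` of `Φ*M` containing them, the largest subfunctor of `M`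
whose restriction lies in `N` contains every `gⱼ`, hence is everything.

Now let `N` be a subfunctor of a finitely generated `D`-module `M`. Then `Φ*N ⊆ Φ*M` is finitely
generated since `C`-modules are Noetherian, and the same elements generate `N`: by essential
surjectivity every value of a subfunctor of `M` is isomorphic to one at an object `Φ c`.
-/

open CategoryTheory

universe u

variable (C : Type u) [Category.{u} C] (k : Type u) [Ring k]

/-- A family of submodules of the values of a functor `M : C ⥤ Mod_k` forms a
subfunctor when it is preserved by all the maps of `M`. -/
def IsSubfunctor (M : C ⥤ ModuleCat.{u} k)
    (N : ∀ c : C, Submodule k (M.obj c)) : Prop :=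
  ∀ {c c' : C} (f : c ⟶ c') (x : M.obj c), x ∈ N c → M.map f x ∈ N c'

/-- A `C`-module (functor `C ⥤ Mod_k`) is finitely generated if finitely many
elements generate it: the only subfunctor containing them is the whole module. -/
def IsFinitelyGenerated (M : C ⥤ ModuleCat.{u} k) : Prop :=
  ∃ (n : ℕ) (c : Fin n → C) (x : ∀ i, M.obj (c i)),
    ∀ N : ∀ d : C, Submodule k (M.obj d), IsSubfunctor C k M N →
      (∀ i, x i ∈ N (c i)) → ∀ d : C, N d = ⊤

/-- A subfunctor is finitely generated if finitely many of its elements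
generate it. -/
def SubfunctorFG (M : C ⥤ ModuleCat.{u} k)
    (N : ∀ c : C, Submodule k (M.obj c)) : Prop :=
  ∃ (n : ℕ) (c : Fin n → C) (x : ∀ i, M.obj (c i)),
    (∀ i, x i ∈ N (c i)) ∧
    ∀ N' : ∀ d : C, Submodule k (M.obj d), IsSubfunctor C k M N' →
      (∀ d : C, N' d ≤ N d) → (∀ i, x i ∈ N' (c i)) → ∀ d : C, N' d = N d

/-- The category of `C`-modules over `k` is Noetherian: every subfunctor of a
finitely generated `C`-module is finitely generated. -/
def ModulesNoetherian : Prop :=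
  ∀ M : C ⥤ ModuleCat.{u} k, IsFinitelyGenerated C k M →
    ∀ N : ∀ c : C, Submodule k (M.obj c), IsSubfunctor C k M N →
      SubfunctorFG C k M N

/-- The representable `C`-module `P_{C,x}`, with `P_{C,x}(y)` the free
`k`-module on `Hom_C(x, y)`. -/
noncomputable def RepresentableModule (x : C) : C ⥤ ModuleCat.{u} k :=
  coyoneda.obj (Opposite.op x) ⋙ ModuleCat.free k

section

variable {C k} {D : Type u} [Category.{u} D]

def IsGeneratedBy (M : C ⥤ ModuleCat.{u} k) {ι : Type*} (c : ι → C) (x : ∀ i, M.obj (c i)) :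
    Prop :=
  ∀ N : ∀ d : C, Submodule k (M.obj d), IsSubfunctor C k M N →
    (∀ i, x i ∈ N (c i)) → ∀ d : C, N d = ⊤

lemma IsFinitelyGenerated.exists_isGeneratedBy {M : C ⥤ ModuleCat.{u} k}
    (hM : IsFinitelyGenerated C k M) :
    ∃ (n : ℕ) (c : Fin n → C) (x : ∀ i, M.obj (c i)), IsGeneratedBy M c x :=
  hM

lemma IsGeneratedBy.isFinitelyGenerated {M : C ⥤ ModuleCat.{u} k} {ι : Type*} [Finite ι]
    {c : ι → C} {x : ∀ i, M.obj (c i)} (h : IsGeneratedBy M c x) :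
    IsFinitelyGenerated C k M := by
  obtain ⟨n, ⟨e⟩⟩ := Finite.exists_equiv_fin ι
  refine ⟨n, c ∘ e.symm, fun j => x (e.symm j), fun N hN hx => h N hN fun i => ?_⟩
  obtain ⟨j, rfl⟩ := e.symm.surjective i
  exact hx j

lemma IsSubfunctor.comap {M M' : C ⥤ ModuleCat.{u} k} (α : M ⟶ M')
    {N : ∀ c : C, Submodule k (M'.obj c)} (hN : IsSubfunctor C k M' N) :
    IsSubfunctor C k M fun c => (N c).comap (α.app c).hom := by
  intro c c' f x hx
  rw [Submodule.mem_comap, NatTrans.naturality_apply]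
  exact hN f _ hx

lemma IsSubfunctor.restrict (Φ : C ⥤ D)
    {M : D ⥤ ModuleCat.{u} k} {N : ∀ d : D, Submodule k (M.obj d)}
    (hN : IsSubfunctor D k M N) :
    IsSubfunctor C k (Φ ⋙ M) fun c => N (Φ.obj c) :=
  fun f x hx => hN (Φ.map f) x hx

lemma IsGeneratedBy.app_mem {M M' : C ⥤ ModuleCat.{u} k} {ι : Type*} {c : ι → C}
    {x : ∀ i, M.obj (c i)} (h : IsGeneratedBy M c x) (α : M ⟶ M')
    {N : ∀ c : C, Submodule k (M'.obj c)} (hN : IsSubfunctor C k M' N)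
    (hx : ∀ i, α.app (c i) (x i) ∈ N (c i)) (d : C) (m : M.obj d) :
    α.app d m ∈ N d :=
  Submodule.eq_top_iff'.mp (h _ (hN.comap α) hx d) m

noncomputable def RepresentableModule.lift {x : C} (M : C ⥤ ModuleCat.{u} k) (m : M.obj x) :
    RepresentableModule C k x ⟶ M where
  app y := ModuleCat.freeDesc (TypeCat.ofHom fun f : x ⟶ y => M.map f m)
  naturality y y' g := by
    refine ModuleCat.free_hom_ext fun f => ?_
    simp [RepresentableModule]

lemma RepresentableModule.lift_app_freeMk {x y : C} (M : C ⥤ ModuleCat.{u} k) (m : M.obj x)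
    (f : x ⟶ y) : (lift M m).app y (ModuleCat.freeMk f) = M.map f m :=
  ModuleCat.freeDesc_apply _ _

/-- The largest subfunctor of `M` whose restriction along `Φ` lies in `N`. -/
def coinducedSubfunctor (Φ : C ⥤ D) (M : D ⥤ ModuleCat.{u} k)
    (N : ∀ c : C, Submodule k (M.obj (Φ.obj c))) (z : D) : Submodule k (M.obj z) where
  carrier := {m | ∀ (c : C) (f : z ⟶ Φ.obj c), M.map f m ∈ N c}
  add_mem' ha hb c f := by
    rw [map_add]
    exact (N c).add_mem (ha c f) (hb c f)
  zero_mem' c f := by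
    rw [map_zero]
    exact (N c).zero_mem
  smul_mem' a _ hm c f := by
    rw [map_smul]
    exact (N c).smul_mem a (hm c f)

lemma isSubfunctor_coinducedSubfunctor (Φ : C ⥤ D) (M : D ⥤ ModuleCat.{u} k)
    (N : ∀ c : C, Submodule k (M.obj (Φ.obj c))) :
    IsSubfunctor D k M (coinducedSubfunctor Φ M N) := by
  intro z z' g m hm c f
  rw [← ConcreteCategory.comp_apply, ← M.map_comp]
  exact hm c (g ≫ f)

lemma IsFinitelyGenerated.restrict (Φ : C ⥤ D)
    (hfin : ∀ y : D, IsFinitelyGenerated C k (Φ ⋙ RepresentableModule D k y))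
    {M : D ⥤ ModuleCat.{u} k} (hM : IsFinitelyGenerated D k M) :
    IsFinitelyGenerated C k (Φ ⋙ M) := by
  obtain ⟨m, d, gen, hgen⟩ := hM.exists_isGeneratedBy
  choose n c p hp using fun j => (hfin (d j)).exists_isGeneratedBy
  let α (j : Fin m) := Functor.whiskerLeft Φ (RepresentableModule.lift M (gen j))
  refine IsGeneratedBy.isFinitelyGenerated (ι := Σ j, Fin (n j))
    (c := fun i => c i.1 i.2) (x := fun i => (α i.1).app _ (p i.1 i.2)) fun N hN hx => ?_
  have hgen_mem (j : Fin m) : gen j ∈ coinducedSubfunctor Φ M N (d j) := fun c' f => by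
    rw [← RepresentableModule.lift_app_freeMk]
    exact (hp j).app_mem (α j) hN (fun i => hx ⟨j, i⟩) c' (ModuleCat.freeMk f)
  have htop := hgen _ (isSubfunctor_coinducedSubfunctor Φ M N) hgen_mem
  refine fun c' => Submodule.eq_top_iff'.mpr fun m => ?_
  simpa using (Submodule.eq_top_iff'.mp (htop (Φ.obj c')) m : _) c' (𝟙 _)

lemma IsSubfunctor.le_of_restrict_le (Φ : C ⥤ D) [Φ.EssSurj] {M : D ⥤ ModuleCat.{u} k}
    {N N' : ∀ z : D, Submodule k (M.obj z)} (hN : IsSubfunctor D k M N)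
    (hN' : IsSubfunctor D k M N') (hle : ∀ c, N (Φ.obj c) ≤ N' (Φ.obj c)) (z : D) :
    N z ≤ N' z := by
  intro m hm
  let e := Φ.objObjPreimageIso z
  have h := hN' e.hom _ (hle _ (hN e.inv m hm))
  rwa [← ConcreteCategory.comp_apply, ← M.map_comp, e.inv_hom_id, M.map_id,
    ConcreteCategory.id_apply] at h

lemma SubfunctorFG.of_restrict (Φ : C ⥤ D) [Φ.EssSurj] {M : D ⥤ ModuleCat.{u} k}
    {N : ∀ z : D, Submodule k (M.obj z)} (hN : IsSubfunctor D k M N)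
    (hfg : SubfunctorFG C k (Φ ⋙ M) fun c => N (Φ.obj c)) :
    SubfunctorFG D k M N := by
  obtain ⟨n, c, x, hx, hgen⟩ := hfg
  refine ⟨n, fun i => Φ.obj (c i), x, hx, fun N' hN' hle hx' z => le_antisymm (hle z) ?_⟩
  have hrestrict := hgen _ (hN'.restrict Φ) (fun c => hle (Φ.obj c)) hx'
  exact hN.le_of_restrict_le Φ hN' (fun c => (hrestrict c).ge) z

end

/-- If `Φ : C ⥤ D` is essentially surjective and finite (the pullback of every
representable `D`-module is a finitely generated `C`-module), and the category
of `C`-modules over `k` is Noetherian, then the category of `D`-modules over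
`k` is Noetherian. -/
theorem noetherian_of_essSurj_finite_functor
    (D : Type u) [Category.{u} D] (Φ : C ⥤ D) (hsurj : Φ.EssSurj)
    (hfin : ∀ y : D, IsFinitelyGenerated C k (Φ ⋙ RepresentableModule D k y))
    (hC : ModulesNoetherian C k) :
    ModulesNoetherian D k :=
  fun _ hM _ hN => SubfunctorFG.of_restrict Φ hN (hC _ (hM.restrict Φ hfin) _ (hN.restrict Φ))
end

section
/- Let R be a finite commutative local ring. If f: R^a → R^b and g: R^b → R^c are column-adapted R-linear maps, then the composition g∘f: R^a → R^c is column-adapted. -/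
/-! The composite is adapted along the composite pivots `s_f ∘ s_g`. Its pivot columns are
the pivot columns of `g`, because the pivot columns of `f` are standard basis vectors. Left of
the pivot `s_f (s_g i)`, every term `g i k * f k j` of the `(i, j)` entry is a non-unit: either
`k < s_g i`, so `g i k` is a non-unit, or `s_g i ≤ k`, so `j < s_f (s_g i) ≤ s_f k` and `f k j` is a
non-unit. In a local ring the non-units form an ideal, so the sum is a non-unit. -/

/-- An `n × n'` matrix over a commutative local ring is column-adapted if there
is a strictly increasing sequence `s₁ < ⋯ < sₙ` of columns such that the
`sᵢ`-th column is the `i`-th standard basis vector and every entry `(i,j)` with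
`j < sᵢ` is a non-unit. -/
def IsColumnAdapted {R : Type*} [CommRing R] {n n' : ℕ}
    (f : Matrix (Fin n) (Fin n') R) : Prop :=
  ∃ s : Fin n → Fin n', StrictMono s ∧
    (∀ i j, f j (s i) = if j = i then (1 : R) else 0) ∧
    (∀ (i : Fin n) (j : Fin n'), (j : ℕ) < (s i : ℕ) → ¬ IsUnit (f i j))

theorem Matrix.mul_apply_of_col_eq_single {R m n o : Type*} [CommRing R] [Fintype n]
    [DecidableEq n] {f : Matrix n o R} {s : n → o}
    (hf : ∀ i j, f j (s i) = if j = i then 1 else 0) (g : Matrix m n R) (i : m) (k : n) :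
    (g * f) i (s k) = g i k := by
  simp only [Matrix.mul_apply, hf, mul_ite, mul_one, mul_zero, Finset.sum_ite_eq',
    Finset.mem_univ, if_true]

theorem Matrix.not_isUnit_mul_apply_of_lt_pivot {R m n o : Type*} [CommRing R] [IsLocalRing R]
    [Fintype n] [LinearOrder n] [Preorder o] {f : Matrix n o R} {g : Matrix m n R}
    {sf : n → o} {sg : m → n} (hsf : Monotone sf)
    (hf : ∀ k j, j < sf k → ¬ IsUnit (f k j))
    (hg : ∀ i k, k < sg i → ¬ IsUnit (g i k))
    {i : m} {j : o} (hj : j < sf (sg i)) :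
    ¬ IsUnit ((g * f) i j) := by
  have hterm : ∀ k, g i k * f k j ∈ IsLocalRing.maximalIdeal R := by
    intro k
    rcases lt_or_ge k (sg i) with hk | hk
    · exact Ideal.mul_mem_right _ _ (hg i k hk)
    · exact Ideal.mul_mem_left _ _ (hf k j (lt_of_lt_of_le hj (hsf hk)))
  rw [Matrix.mul_apply]
  exact (IsLocalRing.mem_maximalIdeal _).1 (Ideal.sum_mem _ fun k _ => hterm k)

theorem isColumnAdapted_comp_general {R : Type*} [CommRing R] [IsLocalRing R]
    {a b c : ℕ} (f : Matrix (Fin b) (Fin a) R) (g : Matrix (Fin c) (Fin b) R)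
    (hf : IsColumnAdapted f) (hg : IsColumnAdapted g) :
    IsColumnAdapted (g * f) := by
  obtain ⟨sf, hsf, hf_pivot, hf_left⟩ := hf
  obtain ⟨sg, hsg, hg_pivot, hg_left⟩ := hg
  refine ⟨sf ∘ sg, hsf.comp hsg, fun i j => ?_, fun i j hj => ?_⟩
  · rw [Function.comp_apply, Matrix.mul_apply_of_col_eq_single hf_pivot, hg_pivot]
  · exact Matrix.not_isUnit_mul_apply_of_lt_pivot hsf.monotone hf_left hg_left hj

/-- Over a finite commutative local ring, the composition of column-adapted
maps is column-adapted. -/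
theorem isColumnAdapted_comp {R : Type*} [CommRing R] [Finite R] [IsLocalRing R]
    {a b c : ℕ} (f : Matrix (Fin b) (Fin a) R) (g : Matrix (Fin c) (Fin b) R)
    (hf : IsColumnAdapted f) (hg : IsColumnAdapted g) :
    IsColumnAdapted (g * f) :=
  isColumnAdapted_comp_general f g hf hg
end

section
/- Let R be a finite commutative local ring and let f: R^{n'} → R^n be a surjective R-linear map. Then f factors uniquely as f = f_2 ∘ f_1 where f_1: R^{n'} → R^n is column-adapted and f_2: R^n → R^n is an isomorphism. -/
/-!
Surjectivity is only used through a right inverse `f * C = 1`. Existence is Gaussian elimination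
on the first column, by induction on the number of columns. If that column lies in the maximal
ideal, the other columns still have a right inverse (correct `C` by `(1 - D)⁻¹`, where `D` has
entries in the maximal ideal), and the column becomes a non-pivot column of the factor. Otherwise
row operations turn it into `e₀`, the lower right block is factored inductively, and the first
row is then cleared in the pivot columns of that block.

Uniqueness: if `A₂ = g * A₁` with both factors column-adapted, induction on the row index shows
that the pivots agree and the columns of `g` are standard basis vectors, since otherwise the
pivot entry `1` of `A₂` would be a sum of non-units.
-/

open Function

namespace Matrix

section Blocks

variable {α : Type*} {ι : Type*} {m n n' : ℕ}

/-- The matrix `[x | A]`. -/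
def consCol (x : ι → α) (A : Matrix ι (Fin n') α) : Matrix ι (Fin (n' + 1)) α :=
  of fun i => Fin.cons (x i) (A i)

@[simp] lemma consCol_zero (x : ι → α) (A : Matrix ι (Fin n') α) i :
    consCol x A i 0 = x i := rfl
@[simp] lemma consCol_succ (x : ι → α) (A : Matrix ι (Fin n') α) i j :
    consCol x A i j.succ = A i j := rfl

lemma consCol_eta (A : Matrix ι (Fin (n' + 1)) α) :
    consCol (fun i => A i 0) (A.submatrix id Fin.succ) = A := by
  ext i j; cases j using Fin.cases <;> rfl

/-- The block matrix `!![a, r; c, B]` with a `1 × 1` upper left corner. -/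
def blockCons (a : α) (r : Fin n' → α) (c : Fin m → α) (B : Matrix (Fin m) (Fin n') α) :
    Matrix (Fin (m + 1)) (Fin (n' + 1)) α :=
  of (Fin.cons (Fin.cons a r) fun i => Fin.cons (c i) (B i))

variable (a : α) (r : Fin n' → α) (c : Fin m → α) (B : Matrix (Fin m) (Fin n') α)

@[simp] lemma blockCons_zero_zero : blockCons a r c B 0 0 = a := rfl
@[simp] lemma blockCons_zero_succ j : blockCons a r c B 0 j.succ = r j := rfl
@[simp] lemma blockCons_succ_zero i : blockCons a r c B i.succ 0 = c i := rfl
@[simp] lemma blockCons_succ_succ i j : blockCons a r c B i.succ j.succ = B i j := rfl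

lemma submatrix_succ_blockCons : (blockCons a r c B).submatrix Fin.succ Fin.succ = B := rfl

lemma transpose_blockCons : (blockCons a r c B)ᵀ = blockCons a c r Bᵀ := by
  ext i j; cases i using Fin.cases <;> cases j using Fin.cases <;> rfl

lemma blockCons_eta (A : Matrix (Fin (m + 1)) (Fin (n' + 1)) α) :
    blockCons (A 0 0) (fun j => A 0 j.succ) (fun i => A i.succ 0) (A.submatrix Fin.succ Fin.succ)
      = A := by
  ext i j; cases i using Fin.cases <;> cases j using Fin.cases <;> rfl

end Blocks

section BlockAlgebra

variable {R : Type*} [CommRing R] {ι : Type*} {m n n' k : ℕ}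

lemma mul_consCol [Fintype ι] (g : Matrix ι ι R) (x : ι → R) (A : Matrix ι (Fin n') R) :
    g * consCol x A = consCol (g *ᵥ x) (g * A) := by
  ext i j; cases j using Fin.cases <;> rfl

lemma consCol_mul (x : ι → R) (A : Matrix ι (Fin n') R) (C : Matrix (Fin (n' + 1)) ι R) :
    consCol x A * C = vecMulVec x (C 0) + A * C.submatrix Fin.succ id := by
  ext i j; simp [mul_apply, Fin.sum_univ_succ, vecMulVec_apply]

lemma one_eq_blockCons : (1 : Matrix (Fin (m + 1)) (Fin (m + 1)) R) = blockCons 1 0 0 1 := by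
  ext i j; cases i using Fin.cases <;> cases j using Fin.cases <;>
    simp [one_apply, Fin.succ_ne_zero, (Fin.succ_ne_zero _).symm]

lemma blockCons_mul_blockCons (a : R) r c (B : Matrix (Fin m) (Fin n) R) (a' : R) r' c'
    (B' : Matrix (Fin n) (Fin k) R) :
    blockCons a r c B * blockCons a' r' c' B' =
      blockCons (a * a' + r ⬝ᵥ c') (a • r' + r ᵥ* B') (a' • c + B *ᵥ c')
        (vecMulVec c r' + B * B') := by
  ext i j; cases i using Fin.cases <;> cases j using Fin.cases <;>
    simp [mul_apply, Fin.sum_univ_succ, dotProduct, vecMul, mulVec, vecMulVec_apply, mul_comm]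

lemma det_blockCons_zero_left (a : R) (r : Fin m → R) (B : Matrix (Fin m) (Fin m) R) :
    (blockCons a r 0 B).det = a * B.det := by
  simp [det_succ_column_zero, Fin.sum_univ_succ]; rfl

lemma det_blockCons_zero_right (a : R) (c : Fin m → R) (B : Matrix (Fin m) (Fin m) R) :
    (blockCons a 0 c B).det = a * B.det := by
  rw [← det_transpose, transpose_blockCons, det_blockCons_zero_left, det_transpose]

/-- One step of block LU decomposition. -/
lemma blockCons_eq_mul (u : Rˣ) (r : Fin n' → R) (c : Fin m → R)
    (B : Matrix (Fin m) (Fin n') R) :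
    blockCons (u : R) r c B =
      blockCons (u : R) 0 c (1 : Matrix (Fin m) (Fin m) R) *
        blockCons 1 (u⁻¹ • r) 0 (B - vecMulVec c (u⁻¹ • r)) := by
  rw [blockCons_mul_blockCons]
  simp [Units.smul_def, smul_smul]

lemma exists_mul_eq_one_of_blockCons_mul_eq_one {r : Fin n' → R} {B : Matrix (Fin m) (Fin n') R}
    {C : Matrix (Fin (n' + 1)) (Fin (m + 1)) R} (h : blockCons 1 r 0 B * C = 1) :
    ∃ C' : Matrix (Fin n') (Fin m) R, B * C' = 1 := by
  rw [← blockCons_eta C, blockCons_mul_blockCons, one_eq_blockCons] at h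
  exact ⟨C.submatrix Fin.succ Fin.succ, by
    simpa [submatrix_succ_blockCons] using congrArg (submatrix · Fin.succ Fin.succ) h⟩

lemma exists_eq_mul_blockCons_one {f : Matrix (Fin (m + 1)) (Fin (n' + 1)) R}
    (h : IsUnit (f 0 0)) :
    ∃ (F : Matrix (Fin (m + 1)) (Fin (m + 1)) R) (r : Fin n' → R)
      (B : Matrix (Fin m) (Fin n') R), IsUnit F.det ∧ f = F * blockCons 1 r 0 B := by
  have hf := blockCons_eq_mul h.unit (fun j => f 0 j.succ) (fun i => f i.succ 0)
    (f.submatrix Fin.succ Fin.succ)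
  rw [IsUnit.unit_spec, blockCons_eta] at hf
  refine ⟨_, _, _, ?_, hf⟩
  rwa [det_blockCons_zero_right, det_one, mul_one]

end BlockAlgebra

lemma exists_mul_eq_one_of_surjective {R : Type*} [CommRing R] {m n : Type*} [Fintype n]
    [DecidableEq m] {f : Matrix m n R} (hf : Surjective f.mulVecLin) :
    ∃ C : Matrix n m R, f * C = 1 := by
  refine ⟨of fun j i => surjInv hf (Pi.single i 1) j, ?_⟩
  ext i k
  simpa [mul_apply, one_apply, Pi.single_apply, eq_comm, mulVec, dotProduct] using
    congrFun (surjInv_eq hf (Pi.single k 1)) i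

section LocalRing

variable {R : Type*} [CommRing R] [IsLocalRing R]

lemma isUnit_det_one_sub {ι : Type*} [Fintype ι] [DecidableEq ι] {D : Matrix ι ι R}
    (hD : ∀ i j, ¬IsUnit (D i j)) : IsUnit (1 - D).det := by
  have hres : (1 - D).map (IsLocalRing.residue R) = 1 := by
    ext i j
    simp [one_apply, apply_ite, (IsLocalRing.residue_eq_zero_iff _).2 (hD i j)]
  rw [← isUnit_map_iff (IsLocalRing.residue R), RingHom.map_det, RingHom.mapMatrix_apply, hres,
    det_one]
  exact isUnit_one

end LocalRing

end Matrix

open Matrix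

section ColumnAdapted

variable {R : Type*} [CommRing R] {m n n' : ℕ}

lemma isColumnAdapted_of_isEmpty (A : Matrix (Fin 0) (Fin n') R) : IsColumnAdapted A :=
  ⟨Fin.elim0, fun i => i.elim0, fun i => i.elim0, fun i => i.elim0⟩

lemma IsColumnAdapted.consCol {A : Matrix (Fin n) (Fin n') R} {x : Fin n → R}
    (hA : IsColumnAdapted A) (hx : ∀ i, ¬IsUnit (x i)) : IsColumnAdapted (consCol x A) := by
  obtain ⟨s, hs, hsc, hsn⟩ := hA
  refine ⟨Fin.succ ∘ s, Fin.strictMono_succ.comp hs, hsc, fun i j hj => ?_⟩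
  cases j using Fin.cases with
  | zero => exact hx i
  | succ j => exact hsn i j (by simpa using hj)

lemma isColumnAdapted_blockCons_one [Nontrivial R] {A : Matrix (Fin m) (Fin n') R}
    {r : Fin n' → R} {s : Fin m → Fin n'} (hs : StrictMono s)
    (hsc : ∀ i j, A j (s i) = if j = i then (1 : R) else 0)
    (hsn : ∀ (i : Fin m) (j : Fin n'), (j : ℕ) < (s i : ℕ) → ¬IsUnit (A i j))
    (hr : ∀ i, r (s i) = 0) :
    IsColumnAdapted (blockCons 1 r 0 A) := by
  refine ⟨Fin.cons 0 (Fin.succ ∘ s),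
    Fin.strictMono_cons.2 ⟨fun _ => Fin.succ_pos _, Fin.strictMono_succ.comp hs⟩,
    fun i j => ?_, fun i j hj => ?_⟩
  · cases i using Fin.cases <;> cases j using Fin.cases <;>
      simp [hr, hsc, Fin.succ_ne_zero, (Fin.succ_ne_zero _).symm]
  · cases i using Fin.cases with
    | zero => simp at hj
    | succ i =>
      cases j using Fin.cases with
      | zero => exact not_isUnit_zero
      | succ j => exact hsn i j (by simpa using hj)

def HasColumnAdaptedFactor (f : Matrix (Fin n) (Fin n') R) : Prop :=
  ∃ (g : Matrix (Fin n) (Fin n) R) (A : Matrix (Fin n) (Fin n') R),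
    IsUnit g.det ∧ IsColumnAdapted A ∧ f = g * A

lemma HasColumnAdaptedFactor.mul_left {f : Matrix (Fin n) (Fin n') R}
    (hf : HasColumnAdaptedFactor f) {g : Matrix (Fin n) (Fin n) R} (hg : IsUnit g.det) :
    HasColumnAdaptedFactor (g * f) := by
  obtain ⟨g', A, hg', hA, rfl⟩ := hf
  exact ⟨g * g', A, by rw [det_mul]; exact hg.mul hg', hA, (Matrix.mul_assoc _ _ _).symm⟩

end ColumnAdapted

section LocalRing

variable {R : Type*} [CommRing R] [IsLocalRing R] {m n n' : ℕ}

lemma HasColumnAdaptedFactor.consCol {A : Matrix (Fin n) (Fin n') R}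
    (hA : HasColumnAdaptedFactor A) {x : Fin n → R} (hx : ∀ i, ¬IsUnit (x i)) :
    HasColumnAdaptedFactor (consCol x A) := by
  obtain ⟨g, A', hg, hA', rfl⟩ := hA
  have hx' : ∀ i, ¬IsUnit ((g⁻¹ *ᵥ x) i) := fun i =>
    show (g⁻¹ *ᵥ x) i ∈ IsLocalRing.maximalIdeal R by
      rw [mulVec, dotProduct]
      exact Ideal.sum_mem _ fun j _ => Ideal.mul_mem_left _ _ (hx j)
  refine ⟨g, _, hg, hA'.consCol hx', ?_⟩
  rw [mul_consCol, mulVec_mulVec, mul_nonsing_inv _ hg, one_mulVec]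

lemma IsColumnAdapted.hasColumnAdaptedFactor_blockCons_one {A : Matrix (Fin m) (Fin n') R}
    (hA : IsColumnAdapted A) (r : Fin n' → R) : HasColumnAdaptedFactor (blockCons 1 r 0 A) := by
  obtain ⟨s, hs, hsc, hsn⟩ := hA
  have hrs : ∀ i, ((r ∘ s) ᵥ* A) (s i) = r (s i) := fun i => by
    simp [vecMul, dotProduct, hsc]
  refine ⟨blockCons 1 (r ∘ s) 0 1, blockCons 1 (r - (r ∘ s) ᵥ* A) 0 A, ?_,
    isColumnAdapted_blockCons_one hs hsc hsn fun i => by simp [hrs], ?_⟩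
  · rw [det_blockCons_zero_left, det_one, one_mul]
    exact isUnit_one
  · rw [blockCons_mul_blockCons]
    simp

lemma HasColumnAdaptedFactor.blockCons_one {B : Matrix (Fin m) (Fin n') R}
    (hB : HasColumnAdaptedFactor B) (r : Fin n' → R) :
    HasColumnAdaptedFactor (blockCons 1 r 0 B) := by
  obtain ⟨g, A, hg, hA, rfl⟩ := hB
  have h := (hA.hasColumnAdaptedFactor_blockCons_one r).mul_left (g := blockCons 1 0 0 g)
    (by rwa [det_blockCons_zero_left, one_mul])
  simpa [blockCons_mul_blockCons] using h

lemma exists_mul_eq_one_of_consCol_mul_eq_one {x : Fin n → R} {A : Matrix (Fin n) (Fin n') R}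
    {C : Matrix (Fin (n' + 1)) (Fin n) R} (hx : ∀ i, ¬IsUnit (x i)) (h : consCol x A * C = 1) :
    ∃ C' : Matrix (Fin n') (Fin n) R, A * C' = 1 := by
  have hAC : A * C.submatrix Fin.succ id = 1 - vecMulVec x (C 0) := by
    rw [← h, consCol_mul, add_sub_cancel_left]
  have hdet : IsUnit (1 - vecMulVec x (C 0)).det :=
    isUnit_det_one_sub fun i j hu => hx i (isUnit_of_mul_isUnit_left hu)
  exact ⟨C.submatrix Fin.succ id * (1 - vecMulVec x (C 0))⁻¹, by
    rw [← Matrix.mul_assoc, hAC, mul_nonsing_inv _ hdet]⟩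

lemma exists_isUnit_det_isUnit_mul_apply_zero {ι : Type*} {f : Matrix (Fin (m + 1)) ι R}
    {j : ι} (h : ∃ i, IsUnit (f i j)) :
    ∃ T : Matrix (Fin (m + 1)) (Fin (m + 1)) R, IsUnit T.det ∧ IsUnit ((T * f) 0 j) := by
  obtain ⟨i, hi⟩ := h
  by_cases h0 : IsUnit (f 0 j)
  · exact ⟨1, by simp, by simpa using h0⟩
  have hi0 : i ≠ 0 := by rintro rfl; exact h0 hi
  refine ⟨transvection 0 i 1, by simp [hi0.symm], ?_⟩
  rw [transvection_mul_apply_same, one_mul]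
  by_contra hsum
  exact (Ideal.add_mem_iff_right (IsLocalRing.maximalIdeal R) h0).1 hsum hi

end LocalRing

section Existence

variable {R : Type*} [CommRing R] [IsLocalRing R]

theorem hasColumnAdaptedFactor_of_mul_eq_one {n n' : ℕ} (f : Matrix (Fin n) (Fin n') R)
    (C : Matrix (Fin n') (Fin n) R) (hfC : f * C = 1) : HasColumnAdaptedFactor f := by
  induction n' generalizing n with
  | zero =>
    cases n with
    | zero => exact ⟨1, f, by simp, isColumnAdapted_of_isEmpty f, (Matrix.one_mul f).symm⟩
    | succ m => simpa [mul_apply] using congrFun₂ hfC 0 0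
  | succ n' ih =>
    by_cases hunit : ∃ i, IsUnit (f i 0)
    · obtain ⟨m, rfl⟩ := Nat.exists_eq_add_one_of_ne_zero (Fin.pos hunit.choose).ne'
      obtain ⟨T, hT, hT0⟩ := exists_isUnit_det_isUnit_mul_apply_zero hunit
      obtain ⟨F, r, B, hF, hTf⟩ := exists_eq_mul_blockCons_one hT0
      have hFC : F * (blockCons 1 r 0 B * (C * T⁻¹)) = 1 := by
        rw [← Matrix.mul_assoc, ← hTf, Matrix.mul_assoc, ← Matrix.mul_assoc f, hfC,
          Matrix.one_mul, mul_nonsing_inv _ hT]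
      obtain ⟨C', hC'⟩ := exists_mul_eq_one_of_blockCons_mul_eq_one (C := C * T⁻¹ * F)
        (by rw [← Matrix.mul_assoc]; exact mul_eq_one_comm.1 hFC)
      have hTf' := ((ih B C' hC').blockCons_one r).mul_left hF
      rw [← hTf] at hTf'
      simpa [nonsing_inv_mul_cancel_left _ _ hT] using
        hTf'.mul_left (isUnit_nonsing_inv_det _ hT)
    · rw [not_exists] at hunit
      rw [← consCol_eta f] at hfC ⊢
      obtain ⟨C', hC'⟩ := exists_mul_eq_one_of_consCol_mul_eq_one hunit hfC
      exact (ih _ C' hC').consCol hunit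

end Existence

section Uniqueness

variable {R : Type*} [CommRing R] {n n' : ℕ} {A₁ A₂ : Matrix (Fin n) (Fin n') R}
  {g : Matrix (Fin n) (Fin n) R} {s t : Fin n → Fin n'}

lemma apply_eq_one_apply_of_pivot_eq (hsc : ∀ i j, A₁ j (s i) = if j = i then (1 : R) else 0)
    (htc : ∀ i j, A₂ j (t i) = if j = i then (1 : R) else 0) (hg : A₂ = g * A₁) {k : Fin n}
    (hk : s k = t k) (j : Fin n) : g j k = (1 : Matrix (Fin n) (Fin n) R) j k := by
  have e := htc k j
  rw [hg, mul_apply, ← hk] at e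
  simpa [hsc k, one_apply] using e

lemma not_lt_pivot_of_mul_eq [IsLocalRing R] (hs : StrictMono s)
    (hsn : ∀ (i : Fin n) (j : Fin n'), (j : ℕ) < (s i : ℕ) → ¬IsUnit (A₁ i j))
    (htc : ∀ i j, A₂ j (t i) = if j = i then (1 : R) else 0) (hg : A₂ = g * A₁) {i : Fin n}
    (hcol : ∀ k < i, ∀ j, g j k = (1 : Matrix (Fin n) (Fin n) R) j k) : ¬t i < s i := by
  intro hlt
  -- the terms `k < i` vanish by `hcol`, the others have `A₁ k (t i)` left of the pivot `s k`
  have hmem : (g * A₁) i (t i) ∈ IsLocalRing.maximalIdeal R := by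
    rw [mul_apply]
    refine Ideal.sum_mem _ fun k _ => ?_
    rcases lt_or_ge k i with hk | hk
    · rw [hcol k hk i, one_apply_ne hk.ne', zero_mul]
      exact Ideal.zero_mem _
    · exact Ideal.mul_mem_left _ _ (hsn k (t i) (hlt.trans_le (hs.monotone hk)))
  rw [← hg, htc, if_pos rfl] at hmem
  exact hmem isUnit_one

theorem IsColumnAdapted.eq_one_of_mul_eq [IsLocalRing R] (h₁ : IsColumnAdapted A₁)
    (h₂ : IsColumnAdapted A₂) {g' : Matrix (Fin n) (Fin n) R} (hg : A₂ = g * A₁)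
    (hg' : A₁ = g' * A₂) : g = 1 := by
  obtain ⟨s, hs, hsc, hsn⟩ := h₁
  obtain ⟨t, ht, htc, htn⟩ := h₂
  have hst : ∀ i, s i = t i := by
    intro i
    induction i using WellFoundedLT.induction with
    | _ i ih =>
      refine le_antisymm (not_lt.1 ?_) (not_lt.1 ?_)
      · exact not_lt_pivot_of_mul_eq hs hsn htc hg fun k hk =>
          apply_eq_one_apply_of_pivot_eq hsc htc hg (ih k hk)
      · exact not_lt_pivot_of_mul_eq ht htn hsc hg' fun k hk =>
          apply_eq_one_apply_of_pivot_eq htc hsc hg' (ih k hk).symm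
  ext j k
  exact apply_eq_one_apply_of_pivot_eq hsc htc hg (hst k) j

end Uniqueness

theorem surjective_factor_columnAdapted_general {R : Type*} [CommRing R]
    [IsLocalRing R] {n n' : ℕ} (f : Matrix (Fin n) (Fin n') R)
    (hf : Function.Surjective f.mulVecLin) :
    ∃! p : Matrix (Fin n) (Fin n') R × Matrix (Fin n) (Fin n) R,
      IsColumnAdapted p.1 ∧ IsUnit p.2.det ∧ f = p.2 * p.1 := by
  obtain ⟨C, hfC⟩ := exists_mul_eq_one_of_surjective hf
  obtain ⟨g, A, hg, hA, rfl⟩ := hasColumnAdaptedFactor_of_mul_eq_one f C hfC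
  refine ⟨(A, g), ⟨hA, hg, rfl⟩, ?_⟩
  rintro ⟨A₂, g₂⟩ ⟨hA₂, hg₂, hfg₂⟩
  have hA₂A : A₂ = (g₂⁻¹ * g) * A := by
    rw [Matrix.mul_assoc, hfg₂, nonsing_inv_mul_cancel_left _ _ hg₂]
  have hg₂g : g₂⁻¹ * g = 1 := hA.eq_one_of_mul_eq hA₂ hA₂A (g' := g⁻¹ * g₂)
    (by rw [Matrix.mul_assoc, ← hfg₂, nonsing_inv_mul_cancel_left _ _ hg])
  refine Prod.ext (by rw [hA₂A, hg₂g, Matrix.one_mul]) ?_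
  rw [← mul_nonsing_inv_cancel_left g₂ g hg₂, hg₂g, Matrix.mul_one]

/-- Over a finite commutative local ring, a surjective linear map `R^{n'} → R^n`
factors uniquely as an isomorphism composed with a column-adapted map. -/
theorem surjective_factor_columnAdapted {R : Type*} [CommRing R] [Finite R]
    [IsLocalRing R] {n n' : ℕ} (f : Matrix (Fin n) (Fin n') R)
    (hf : Function.Surjective f.mulVecLin) :
    ∃! p : Matrix (Fin n) (Fin n') R × Matrix (Fin n) (Fin n) R,
      IsColumnAdapted p.1 ∧ IsUnit p.2.det ∧ f = p.2 * p.1 :=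
  surjective_factor_columnAdapted_general f hf
end

section
/- Let k be a nonzero ring and Γ a group containing a subgroup that is not finitely generated. Then the group ring k[Γ] is not left Noetherian. -/
/-!
The left ideal `I_K = ker (k[Γ] → k[Γ ⧸ K])` remembers `K`: the element `g - 1` lies in `I_K`
exactly when `g ∈ K`. Hence `K ↦ I_K` is an order embedding of the subgroup lattice of `Γ` into
the lattice of left ideals of `k[Γ]`, so the ascending chain condition on left ideals passes to
subgroups of `Γ`, and there it forces every subgroup to be finitely generated.
-/

open MonoidAlgebra

theorem Subgroup.fg_of_wellFoundedGT {G : Type*} [Group G] [WellFoundedGT (Subgroup G)]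
    (H : Subgroup G) : H.FG := by
  classical
  obtain ⟨_, ⟨T, hTH, rfl⟩, hmax⟩ := exists_maximal_of_wellFoundedGT
    (fun K : Subgroup G => ∃ T : Finset G, ↑T ⊆ (H : Set G) ∧ closure (T : Set G) = K)
    ⟨⊥, ∅, by simp, by simp⟩
  refine ⟨T, le_antisymm ((closure_le H).2 hTH) fun g hg => ?_⟩
  have : closure ↑(insert g T) ≤ closure (T : Set G) :=
    hmax ⟨insert g T, by simp [Set.insert_subset_iff, hg, hTH], rfl⟩ (closure_mono (by simp))
  exact this (subset_closure (by simp))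

namespace MonoidAlgebra

section Semiring

variable {k : Type*} [Semiring k]

lemma mapDomain_comp {A B C : Type*} (f : A → B) (g : B → C) (x : k[A]) :
    mapDomain (g ∘ f) x = mapDomain g (mapDomain f x) := by
  ext; simp [Finsupp.mapDomain_comp]

variable {Γ X : Type*} [Group Γ] [MulAction Γ X]

lemma mapDomain_single_mul_of_equivariant {f : Γ → X} (hf : ∀ g h, f (g * h) = g • f h)
    (g : Γ) (c : k) (x : k[Γ]) :
    mapDomain f (single g c * x) = mapDomain (g • · : X → X) (c • mapDomain f x) := by
  induction x using MonoidAlgebra.induction_linear with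
  | zero => simp [mapDomain_zero]
  | add x y hx hy => simp only [mul_add, mapDomain_add, smul_add, hx, hy]
  | single h d => simp [single_mul_single, mapDomain_single, smul_single, hf]

lemma mapDomain_mul_eq_zero_of_equivariant {f : Γ → X} (hf : ∀ g h, f (g * h) = g • f h)
    (r : k[Γ]) {x : k[Γ]} (hx : mapDomain f x = 0) : mapDomain f (r * x) = 0 := by
  induction r using MonoidAlgebra.induction_linear with
  | zero => simp [mapDomain_zero]
  | add r s hr hs => rw [add_mul, mapDomain_add, hr, hs, add_zero]
  | single g c => rw [mapDomain_single_mul_of_equivariant hf, hx, smul_zero, mapDomain_zero]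

variable (k) in
def kerMapDomainMk (K : Subgroup Γ) : Submodule k[Γ] k[Γ] where
  carrier := {x | mapDomain (QuotientGroup.mk : Γ → Γ ⧸ K) x = 0}
  zero_mem' := mapDomain_zero _
  add_mem' hx hy := by simp_all [mapDomain_add]
  smul_mem' r _ hx := mapDomain_mul_eq_zero_of_equivariant (fun _ _ => rfl) r hx

lemma kerMapDomainMk_mono {K L : Subgroup Γ} (hKL : K ≤ L) :
    kerMapDomainMk k K ≤ kerMapDomainMk k L := fun x hx => by
  have : (QuotientGroup.mk : Γ → Γ ⧸ L) = Subgroup.quotientMapOfLE hKL ∘ QuotientGroup.mk := rfl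
  change mapDomain _ x = 0
  rw [this, mapDomain_comp, hx, mapDomain_zero]

end Semiring

variable {k Γ : Type*} [Ring k] [Nontrivial k] [Group Γ]

lemma single_sub_one_mem_kerMapDomainMk_iff {K : Subgroup Γ} {g : Γ} :
    single g (1 : k) - 1 ∈ kerMapDomainMk k K ↔ g ∈ K := by
  show mapDomainLinearMap k k (QuotientGroup.mk : Γ → Γ ⧸ K) (single g 1 - 1) = 0 ↔ _
  rw [map_sub, one_def, mapDomainLinearMap_single, mapDomainLinearMap_single, sub_eq_zero,
    single_left_inj one_ne_zero, QuotientGroup.eq]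
  simp

lemma kerMapDomainMk_le_kerMapDomainMk_iff {K L : Subgroup Γ} :
    kerMapDomainMk k K ≤ kerMapDomainMk k L ↔ K ≤ L := by
  refine ⟨fun h g hg => ?_, kerMapDomainMk_mono⟩
  rw [← single_sub_one_mem_kerMapDomainMk_iff (k := k)] at hg ⊢
  exact h hg

end MonoidAlgebra

/-- If `Γ` contains a subgroup which is not finitely generated, then for any
nonzero ring `k` the group ring `k[Γ]` is not (left) Noetherian. -/
theorem monoidAlgebra_not_noetherian {k : Type*} [Ring k] [Nontrivial k]
    {Γ : Type*} [Group Γ] (H : Subgroup Γ) (hH : ¬ H.FG) :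
    ¬ IsNoetherianRing (MonoidAlgebra k Γ) := by
  intro _
  have : WellFoundedGT (Subgroup Γ) :=
    (OrderEmbedding.ofMapLEIff (kerMapDomainMk k)
      fun _ _ => kerMapDomainMk_le_kerMapDomainMk_iff).wellFoundedGT
  exact hH H.fg_of_wellFoundedGT
end

section
/- Let (A,⊛) be a complemented category with generator X. Then for all objects V, V' of A, the group Aut_A(V') acts transitively on the set Hom_A(V, V'). -/
/-!
Take complements `D` of `f` and `D'` of `g`, so that `V ⊗ D ≅ V' ≅ V ⊗ D'`. Since every object
is a tensor power of the generator `X` and ranks add under `⊗`, the complements have the same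
`X`-rank, hence `D ≅ D'`. Whiskering this isomorphism with `V` and conjugating by the two
decompositions of `V'` gives an automorphism of `V'` carrying `f` to `g`.
-/

open CategoryTheory CategoryTheory.Limits CategoryTheory.MonoidalCategory

universe u v

variable {A : Type u} [Category.{v} A] [MonoidalCategory A]

/-- The canonical morphism `V ⟶ V ⊗ V'` coming from the fact that the monoidal
unit is initial. -/
def canL (hI : IsInitial (𝟙_ A)) (V V' : A) : V ⟶ V ⊗ V' :=
  (ρ_ V).inv ≫ (V ◁ hI.to V')

/-- The canonical morphism `V' ⟶ V ⊗ V'` coming from the fact that the monoidal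
unit is initial. -/
def canR (hI : IsInitial (𝟙_ A)) (V V' : A) : V' ⟶ V ⊗ V' :=
  (λ_ V').inv ≫ (hI.to V ▷ V')

/-- `d : D ⟶ V` is a complement of the subobject `c : C ⟶ V`. -/
def IsComplement (hI : IsInitial (𝟙_ A)) {C V D : A} (c : C ⟶ V) (d : D ⟶ V) : Prop :=
  ∃ φ : C ⊗ D ≅ V, canL hI C D ≫ φ.hom = c ∧ canR hI C D ≫ φ.hom = d

/-- A complemented category: a symmetric monoidal category in which every
morphism is a monomorphism, the monoidal unit is initial, morphisms out of a
tensor product are determined by their precompositions with the two canonical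
morphisms, and every subobject has a complement, unique up to isomorphism. -/
structure ComplementedCategory (A : Type u) [Category.{v} A] [MonoidalCategory A]
    [SymmetricCategory A] : Prop where
  mono : ∀ {V W : A} (f : V ⟶ W), Mono f
  unitInitial : Nonempty (IsInitial (𝟙_ A))
  hom_ext : ∀ (hI : IsInitial (𝟙_ A)) {V V' W : A} (f g : V ⊗ V' ⟶ W),
    canL hI V V' ≫ f = canL hI V V' ≫ g → canR hI V V' ≫ f = canR hI V V' ≫ g → f = g
  compl_exists : ∀ (hI : IsInitial (𝟙_ A)) {C V : A} (c : C ⟶ V),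
    ∃ (D : A) (d : D ⟶ V), IsComplement hI c d
  compl_unique : ∀ (hI : IsInitial (𝟙_ A)) {C V D D' : A} (c : C ⟶ V)
    (d : D ⟶ V) (d' : D' ⟶ V), IsComplement hI c d → IsComplement hI c d' →
    ∃ ψ : D ≅ D', ψ.hom ≫ d' = d

/-- Iterated tensor powers of an object. -/
def tpow (X : A) : ℕ → A
  | 0 => 𝟙_ A
  | n + 1 => tpow X n ⊗ X

/-- `X` is a generator: every object is isomorphic to a unique tensor power of
`X` (whose exponent is called the `X`-rank of the object). -/
def IsGen (X : A) : Prop :=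
  ∀ V : A, ∃! i : ℕ, Nonempty (V ≅ tpow X i)

def tpowAdd (X : A) : ∀ i j : ℕ, tpow X i ⊗ tpow X j ≅ tpow X (i + j)
  | _, 0 => ρ_ _
  | i, j + 1 => (α_ _ _ _).symm ≪≫ whiskerRightIso (tpowAdd X i j) X

namespace IsGen

variable {X : A} (hX : IsGen X)
include hX

theorem eq_of_iso {m n : ℕ} (e : tpow X m ≅ tpow X n) : m = n :=
  (hX (tpow X m)).unique ⟨Iso.refl _⟩ ⟨e⟩

theorem nonempty_iso_of_tensor_iso {C D D' : A} (e : C ⊗ D ≅ C ⊗ D') : Nonempty (D ≅ D') := by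
  obtain ⟨i, ⟨eC⟩, -⟩ := hX C
  obtain ⟨j, ⟨eD⟩, -⟩ := hX D
  obtain ⟨k, ⟨eD'⟩, -⟩ := hX D'
  have hjk : i + j = i + k := hX.eq_of_iso <|
    (tpowAdd X i j).symm ≪≫ (tensorIso eC eD).symm ≪≫ e ≪≫ tensorIso eC eD' ≪≫ tpowAdd X i k
  obtain rfl : j = k := Nat.add_left_cancel hjk
  exact ⟨eD ≪≫ eD'.symm⟩

theorem nonempty_iso_of_isComplement (hI : IsInitial (𝟙_ A)) {C V D D' : A}
    {c c' : C ⟶ V} {d : D ⟶ V} {d' : D' ⟶ V}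
    (hc : IsComplement hI c d) (hc' : IsComplement hI c' d') : Nonempty (D ≅ D') := by
  obtain ⟨φ, -⟩ := hc
  obtain ⟨φ', -⟩ := hc'
  exact hX.nonempty_iso_of_tensor_iso (φ ≪≫ φ'.symm)

end IsGen

theorem canL_comp_whiskerLeft (hI : IsInitial (𝟙_ A)) (C : A) {D D' : A} (h : D ⟶ D') :
    canL hI C D ≫ (C ◁ h) = canL hI C D' := by
  rw [canL, canL, Category.assoc, ← MonoidalCategory.whiskerLeft_comp, hI.hom_ext (hI.to D ≫ h)]

theorem IsComplement.exists_iso_comp_eq (hI : IsInitial (𝟙_ A)) {C V V' D D' : A}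
    {c : C ⟶ V} {d : D ⟶ V} {c' : C ⟶ V'} {d' : D' ⟶ V'}
    (hc : IsComplement hI c d) (hc' : IsComplement hI c' d') (ψ : D ≅ D') :
    ∃ η : V ≅ V', c ≫ η.hom = c' := by
  obtain ⟨φ, hφ, -⟩ := hc
  obtain ⟨φ', hφ', -⟩ := hc'
  refine ⟨φ.symm ≪≫ whiskerLeftIso C ψ ≪≫ φ', ?_⟩
  rw [← hφ, ← hφ']
  simp only [Iso.trans_hom, Iso.symm_hom, whiskerLeftIso_hom, Category.assoc,
    Iso.hom_inv_id_assoc]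
  rw [← Category.assoc, canL_comp_whiskerLeft]

/-- In a complemented category with generator `X`, the automorphism group of
`V'` acts transitively on `Hom(V, V')`. -/
theorem aut_transitive_on_hom [SymmetricCategory A]
    (hA : ComplementedCategory A) (X : A) (hX : IsGen X)
    (V V' : A) (f g : V ⟶ V') :
    ∃ η : Aut V', f ≫ η.hom = g := by
  obtain ⟨hI⟩ := hA.unitInitial
  obtain ⟨D, d, hf⟩ := hA.compl_exists hI f
  obtain ⟨D', d', hg⟩ := hA.compl_exists hI g
  obtain ⟨ψ⟩ := hX.nonempty_iso_of_isComplement hI hf hg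
  exact hf.exists_iso_comp_eq hI hg ψ
end

section
/- Let (A,⊛) be a complemented category and V, V' objects of A. The map φ: Aut_A(V) × Aut_A(V') → Aut_A(V⊛V') given by φ(f,g) = f⊛g is an injective group homomorphism. -/
open CategoryTheory CategoryTheory.Limits CategoryTheory.MonoidalCategory

universe u v

variable {A : Type u} [Category.{v} A] [MonoidalCategory A]

section CanonicalMorphisms

variable (hI : IsInitial (𝟙_ A))

theorem canL_tensorHom {V W V' W' : A} (f : V ⟶ W) (g : V' ⟶ W') :
    canL hI V V' ≫ (f ⊗ₘ g) = f ≫ canL hI W W' := by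
  unfold canL
  rw [Category.assoc, MonoidalCategory.tensorHom_def, ← Category.assoc (V ◁ _), whisker_exchange,
    Category.assoc, ← MonoidalCategory.whiskerLeft_comp, hI.hom_ext (hI.to V' ≫ g) (hI.to W'),
    ← Category.assoc, ← MonoidalCategory.rightUnitor_inv_naturality, Category.assoc]

theorem canR_tensorHom {V W V' W' : A} (f : V ⟶ W) (g : V' ⟶ W') :
    canR hI V V' ≫ (f ⊗ₘ g) = g ≫ canR hI W W' := by
  unfold canR
  rw [Category.assoc, tensorHom_def', ← Category.assoc (_ ▷ V'), ← whisker_exchange,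
    Category.assoc, ← MonoidalCategory.comp_whiskerRight, hI.hom_ext (hI.to V ≫ f) (hI.to W),
    ← Category.assoc, ← MonoidalCategory.leftUnitor_inv_naturality, Category.assoc]

theorem tensorHom_injective {V W V' W' : A} [Mono (canL hI W W')] [Mono (canR hI W W')]
    {f f' : V ⟶ W} {g g' : V' ⟶ W'} (h : f ⊗ₘ g = f' ⊗ₘ g') : f = f' ∧ g = g' := by
  constructor
  · rw [← cancel_mono (canL hI W W'), ← canL_tensorHom, h, canL_tensorHom]
  · rw [← cancel_mono (canR hI W W'), ← canR_tensorHom, h, canR_tensorHom]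

end CanonicalMorphisms

theorem tensorIso_trans {X Y Z X' Y' Z' : A} (f : X ≅ Y) (f' : Y ≅ Z) (g : X' ≅ Y')
    (g' : Y' ≅ Z') : (f ≪≫ f') ⊗ᵢ (g ≪≫ g') = (f ⊗ᵢ g) ≪≫ (f' ⊗ᵢ g') := by
  ext
  exact (tensorHom_comp_tensorHom f.hom g.hom f'.hom g'.hom).symm

/-- In a complemented category, the map
`Aut(V) × Aut(V') → Aut(V ⊗ V')`, `(f, g) ↦ f ⊗ g`, is an injective group
homomorphism. -/
theorem tensor_aut_injective_hom [SymmetricCategory A]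
    (hA : ComplementedCategory A) (V V' : A)
    (φ : Aut V × Aut V' → Aut (V ⊗ V'))
    (hφ : ∀ p : Aut V × Aut V', φ p = tensorIso p.1 p.2) :
    Function.Injective φ ∧ ∀ p q : Aut V × Aut V', φ (p * q) = φ p * φ q := by
  obtain ⟨hI⟩ := hA.unitInitial
  have := hA.mono (canL hI V V')
  have := hA.mono (canR hI V V')
  refine ⟨fun p q hpq => ?_, fun p q => ?_⟩
  · rw [hφ, hφ] at hpq
    obtain ⟨h₁, h₂⟩ := tensorHom_injective hI (congrArg Iso.hom hpq)
    exact Prod.ext (Iso.ext h₁) (Iso.ext h₂)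
  · rw [hφ, hφ, hφ]
    exact tensorIso_trans q.1 p.1 q.2 p.2
end

section
/- Let (A,⊛) be a complemented category, V, V' objects, and let i: V → V⊛V' and i': V' → V⊛V' be the canonical morphisms. Then the subgroup of Aut_A(V⊛V') of automorphisms η with η∘i = i equals the image of id_V × Aut_A(V') under the homomorphism (f,g) ↦ f⊛g, and is hence isomorphic to Aut_A(V'). -/
open CategoryTheory CategoryTheory.Limits CategoryTheory.MonoidalCategory

universe u v

variable {A : Type u} [Category.{v} A] [MonoidalCategory A]

section Canonical

variable (hI : IsInitial (𝟙_ A))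

lemma canL_whiskerLeft {V W W' : A} (g : W ⟶ W') :
    canL hI V W ≫ V ◁ g = canL hI V W' := by
  simp [canL, ← MonoidalCategory.whiskerLeft_comp, hI.hom_ext (hI.to W ≫ g) (hI.to W')]

lemma canR_whiskerLeft {V W W' : A} (g : W ⟶ W') :
    canR hI V W ≫ V ◁ g = g ≫ canR hI V W' := by
  simp only [canR, Category.assoc, ← whisker_exchange, leftUnitor_inv_naturality_assoc]

lemma isComplement_canL_canR (V W : A) : IsComplement hI (canL hI V W) (canR hI V W) :=
  ⟨Iso.refl _, Category.comp_id _, Category.comp_id _⟩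

end Canonical

namespace ComplementedCategory

variable [SymmetricCategory A]

lemma whiskerLeft_injective (hA : ComplementedCategory A) (hI : IsInitial (𝟙_ A)) {V W W' : A} :
    Function.Injective (fun g : W ⟶ W' => V ◁ g) := by
  intro g g' h
  have := hA.mono (canR hI V W')
  rw [← cancel_mono (canR hI V W'), ← canR_whiskerLeft, ← canR_whiskerLeft]
  exact congrArg _ h

lemma exists_eq_whiskerLeft_of_canL_comp (hA : ComplementedCategory A)
    (hI : IsInitial (𝟙_ A)) {V W W' : A} (η : V ⊗ W ≅ V ⊗ W')
    (h : canL hI V W ≫ η.hom = canL hI V W') : ∃ g : W ≅ W', η.hom = V ◁ g.hom := by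
  -- `canR ≫ η` and `canR` are both complements of `canL`, so uniqueness of complements gives `g`.
  obtain ⟨g, hg⟩ := hA.compl_unique hI (canL hI V W') (canR hI V W ≫ η.hom) (canR hI V W')
    ⟨η, h, rfl⟩ (isComplement_canL_canR hI V W')
  refine ⟨g, hA.hom_ext hI _ _ ?_ ?_⟩
  · rw [h, canL_whiskerLeft]
  · rw [canR_whiskerLeft, hg]

end ComplementedCategory

/-- In a complemented category, with `i : V ⟶ V ⊗ V'` the canonical morphism,
the automorphisms `η` of `V ⊗ V'` satisfying `η ∘ i = i` are precisely those
of the form `id_V ⊗ g` for `g ∈ Aut(V')`; moreover `g ↦ id_V ⊗ g` is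
injective, so this subgroup is isomorphic to `Aut(V')`. -/
theorem stabilizer_of_canonical_eq_aut [SymmetricCategory A]
    (hA : ComplementedCategory A) (V V' : A) (hI : IsInitial (𝟙_ A)) :
    (∀ η : Aut (V ⊗ V'),
        canL hI V V' ≫ η.hom = canL hI V V' ↔
          ∃ g : Aut V', η = tensorIso (Iso.refl V) g) ∧
    Function.Injective
      (fun g : Aut V' => (tensorIso (Iso.refl V) g : Aut (V ⊗ V'))) := by
  have hom_eq (g : Aut V') : (tensorIso (Iso.refl V) g).hom = V ◁ g.hom :=
    id_tensorHom V g.hom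
  refine ⟨fun η => ⟨fun h => ?_, ?_⟩, fun g g' h => ?_⟩
  · obtain ⟨g, hg⟩ := hA.exists_eq_whiskerLeft_of_canL_comp hI η h
    exact ⟨g, Iso.ext (hg.trans (hom_eq g).symm)⟩
  · rintro ⟨g, rfl⟩
    rw [hom_eq]
    exact canL_whiskerLeft hI g.hom
  · refine Iso.ext (hA.whiskerLeft_injective hI (V := V) ?_)
    simpa only [hom_eq] using congrArg Iso.hom h
end
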